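/- Let r : ℝ → ℝ be a continuous 1-periodic function that is not constant, and let q ∈ ℝ with q ≠ 0. Then there exists a positive, 1-periodic, C² function D : ℝ → ℝ such that whenever (k_q, ψ) is a principal eigenpair of L_q^0[r;D] and (k₀, φ) is a principal eigenpair of L_0^0[r;D], one has k_q < k₀. -/

import Mathlib

open Real MeasureTheory Set Filter Topology

noncomputable section

/-- The operator `L_q^λ[r;D]` acting on C² functions `ψ`:
`(L_q^λ[r;D]ψ)(x) = D ψ'' + ((1+q)D' − 2λD) ψ' + (qD'' + λ²D − (1+q)λD' + r) ψ`. -/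
def Lop (q lam : ℝ) (r D ψ : ℝ → ℝ) (x : ℝ) : ℝ :=
  D x * deriv (deriv ψ) x + ((1 + q) * deriv D x - 2 * lam * D x) * deriv ψ x +
    (q * deriv (deriv D) x + lam ^ 2 * D x - (1 + q) * lam * deriv D x + r x) * ψ x

/-- `(k, ψ)` is a principal eigenpair of `L_q^λ[r;D]`: `ψ` is a positive, 1-periodic,
C² function with `L_q^λ[r;D]ψ = kψ`. -/
def IsEigenpair (q lam : ℝ) (r D : ℝ → ℝ) (k : ℝ) (ψ : ℝ → ℝ) : Prop :=
  ContDiff ℝ 2 ψ ∧ (∀ x, 0 < ψ x) ∧ Function.Periodic ψ 1 ∧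
    ∀ x, Lop q lam r D ψ x = k * ψ x

/-- The Freidlin–Gärtner infimum `inf_{λ>0} k(λ)/λ`, as an extended real number. -/
def speed (k : ℝ → ℝ) : EReal := ⨅ l : {l : ℝ // 0 < l}, ((k l.1 / l.1 : ℝ) : EReal)

/-!
Take `D = C - (2/q) A`, where `A` is periodic with `A'' = r - r̄`, `r̄ = ∫₀¹ r`, and `C` is large,
so that `(q/2) D'' + r ≡ r̄`. For `q = 0`, the flux `D φ'/φ` has derivative `k₀ - r - D (φ'/φ)²`;
integrating over a period gives `r̄ ≤ k₀`. For `q ≠ 0`, `χ = D^(q/2) ψ` satisfies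
`(D χ')' = (k_q - r̄ + (q/2)² D'²/D) χ`; integrating over a period forces `k_q < r̄`, because
`D'` does not vanish identically (otherwise `r ≡ r̄`).
-/

open Function intervalIntegral

theorem Function.Periodic.deriv {𝕜 F : Type*} [NontriviallyNormedField 𝕜] [NormedAddCommGroup F]
    [NormedSpace 𝕜 F] {f : 𝕜 → F} {c : 𝕜} (h : Periodic f c) : Periodic (deriv f) c := fun x => by
  rw [← deriv_comp_add_const, show (fun y => f (y + c)) = f from funext h]

theorem Function.Periodic.intervalIntegral_eq_zero_of_hasDerivAt {F f : ℝ → ℝ} {T : ℝ}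
    (hF : Periodic F T) (hderiv : ∀ x, HasDerivAt F (f x) x)
    (hf : IntervalIntegrable f volume 0 T) : ∫ x in 0..T, f x = 0 := by
  have hT : F T = F 0 := by simpa using hF 0
  rw [integral_eq_sub_of_hasDerivAt (fun x _ => hderiv x) hf, hT, sub_self]

theorem Function.Periodic.intervalIntegral_pos {f : ℝ → ℝ} {T : ℝ} (hf : Periodic f T)
    (hT : 0 < T) (hcont : Continuous f) (hnonneg : ∀ x, 0 ≤ f x) (hpos : ∃ x, 0 < f x) :
    0 < ∫ x in 0..T, f x := by
  obtain ⟨x, hx⟩ := hpos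
  obtain ⟨y, hy, hxy⟩ := hf.exists_mem_Ico₀ hT x
  exact integral_pos hT hcont.continuousOn (fun z _ => hnonneg z)
    ⟨y, Ico_subset_Icc_self hy, hxy ▸ hx⟩

def periodicPrimitive (g : ℝ → ℝ) (x : ℝ) : ℝ :=
  (∫ t in 0..x, g t) - x * ∫ t in 0..1, g t

theorem hasDerivAt_periodicPrimitive {g : ℝ → ℝ} (hg : Continuous g) (x : ℝ) :
    HasDerivAt (periodicPrimitive g) (g x - ∫ t in 0..1, g t) x :=
  (hg.integral_hasStrictDerivAt 0 x).hasDerivAt.sub (hasDerivAt_mul_const _)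

theorem continuous_periodicPrimitive {g : ℝ → ℝ} (hg : Continuous g) :
    Continuous (periodicPrimitive g) :=
  continuous_iff_continuousAt.2 fun x => (hasDerivAt_periodicPrimitive hg x).continuousAt

theorem periodic_periodicPrimitive {g : ℝ → ℝ} (hg : Continuous g) (hper : Periodic g 1) :
    Periodic (periodicPrimitive g) 1 := fun x => by
  simp only [periodicPrimitive]
  rw [hper.intervalIntegral_add_eq_add 0 x fun a b => hg.intervalIntegrable a b, zero_add]
  ring

theorem exists_periodic_deriv_deriv_eq_sub_integral {r : ℝ → ℝ} (hr : Continuous r)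
    (hper : Periodic r 1) :
    ∃ A : ℝ → ℝ, ContDiff ℝ 2 A ∧ Periodic A 1 ∧
      ∀ x, deriv (deriv A) x = r x - ∫ t in 0..1, r t := by
  set R := periodicPrimitive r
  have hR := hasDerivAt_periodicPrimitive hr
  have hRc : Continuous R := continuous_periodicPrimitive hr
  have hA := hasDerivAt_periodicPrimitive hRc
  have hA' : deriv (periodicPrimitive R) = fun x => R x - ∫ t in 0..1, R t :=
    funext fun x => (hA x).deriv
  have hA'' : deriv (deriv (periodicPrimitive R)) = fun x => r x - ∫ t in 0..1, r t := by
    rw [hA']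
    exact funext fun x => ((hR x).sub_const _).deriv
  refine ⟨periodicPrimitive R, ?_,
    periodic_periodicPrimitive hRc (periodic_periodicPrimitive hr hper), fun x => by rw [hA'']⟩
  rw [show (2 : WithTop ℕ∞) = 1 + 1 from rfl, contDiff_succ_iff_deriv, contDiff_one_iff_deriv,
    hA'', hA']
  exact ⟨fun x => (hA x).differentiableAt, by simp,
    fun x => ((hR x).sub_const _).differentiableAt, hr.sub continuous_const⟩

theorem IsEigenpair.integral_le {r D φ : ℝ → ℝ} {k : ℝ} (hr : Continuous r)
    (hD : Differentiable ℝ D) (hDper : Periodic D 1) (hD0 : ∀ x, 0 ≤ D x)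
    (h : IsEigenpair 0 0 r D k φ) : ∫ x in 0..1, r x ≤ k := by
  obtain ⟨hφ, hφpos, hφper, hφeq⟩ := h
  set f : ℝ → ℝ := fun x => (k - r x) - D x * (deriv φ x / φ x) ^ 2
  have hflux : ∀ x, HasDerivAt (fun y => D y * deriv φ y / φ y) (f x) x := fun x =>
    (((hD x).hasDerivAt.mul (hφ.differentiable_deriv_two x).hasDerivAt).div
      (hφ.differentiable two_ne_zero x).hasDerivAt (hφpos x).ne').congr_deriv (by
        have hLop := hφeq x
        simp only [Lop] at hLop
        have hφx := (hφpos x).ne'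
        simp only [f, Pi.mul_apply]
        field_simp
        linear_combination φ x * hLop)
  have hfc : Continuous f := (continuous_const.sub hr).sub (hD.continuous.mul
    (((hφ.continuous_deriv one_le_two).div hφ.continuous fun x => (hφpos x).ne').pow 2))
  have hper : Periodic (fun y => D y * deriv φ y / φ y) 1 := fun x => by
    simp only [hDper x, hφper x, hφper.deriv x]
  have hf0 : ∫ x in 0..1, f x = 0 :=
    hper.intervalIntegral_eq_zero_of_hasDerivAt hflux (hfc.intervalIntegrable 0 1)
  have hle : ∫ x in 0..1, f x ≤ ∫ x in 0..1, (k - r x) :=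
    integral_mono_on zero_le_one (hfc.intervalIntegrable 0 1)
      ((continuous_const.sub hr).intervalIntegrable 0 1)
      fun x _ => sub_le_self _ (mul_nonneg (hD0 x) (sq_nonneg _))
  rw [hf0, integral_sub intervalIntegrable_const (hr.intervalIntegrable 0 1)] at hle
  simp only [intervalIntegral.integral_const, sub_zero, smul_eq_mul, one_mul] at hle
  linarith

theorem hasDerivAt_weighted_flux_of_Lop_eq {r D ψ : ℝ → ℝ} {q k : ℝ} (hD : ContDiff ℝ 2 D)
    (hDpos : ∀ x, 0 < D x) (hψ : ContDiff ℝ 2 ψ) (heq : ∀ x, Lop q 0 r D ψ x = k * ψ x) (x : ℝ) :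
    HasDerivAt (fun y => D y ^ (q / 2) * (D y * deriv ψ y + q / 2 * deriv D y * ψ y))
      ((k - q / 2 * deriv (deriv D) x - r x) * (D x ^ (q / 2) * ψ x)
        + (q / 2) ^ 2 * deriv D x ^ 2 * (D x ^ (q / 2 - 1) * ψ x)) x := by
  have hDx := (hD.differentiable two_ne_zero x).hasDerivAt
  have hD'x := (hD.differentiable_deriv_two x).hasDerivAt
  have hψx := (hψ.differentiable two_ne_zero x).hasDerivAt
  have hψ'x := (hψ.differentiable_deriv_two x).hasDerivAt
  refine ((hDx.rpow_const (Or.inl (hDpos x).ne')).mul ((hDx.mul hψ'x).add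
    ((hD'x.const_mul (q / 2)).mul hψx))).congr_deriv ?_
  have hLop := heq x
  simp only [Lop] at hLop
  have hpow : D x ^ (q / 2) = D x ^ (q / 2 - 1) * D x := by
    rw [← rpow_add_one (hDpos x).ne', sub_add_cancel]
  simp only [Pi.mul_apply, Pi.add_apply, hpow]
  linear_combination D x ^ (q / 2 - 1) * D x * hLop

theorem IsEigenpair.lt_of_mul_deriv_deriv_add_eq {r D ψ : ℝ → ℝ} {q k c : ℝ} (hq : q ≠ 0)
    (hD : ContDiff ℝ 2 D) (hDpos : ∀ x, 0 < D x) (hDper : Periodic D 1)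
    (hDr : ∀ x, q / 2 * deriv (deriv D) x + r x = c) (hD' : ∃ x, deriv D x ≠ 0)
    (h : IsEigenpair q 0 r D k ψ) : k < c := by
  obtain ⟨hψ, hψpos, hψper, hψeq⟩ := h
  set f : ℝ → ℝ := fun x =>
    (k - c) * (D x ^ (q / 2) * ψ x) + (q / 2) ^ 2 * deriv D x ^ 2 * (D x ^ (q / 2 - 1) * ψ x)
  set F : ℝ → ℝ := fun y => D y ^ (q / 2) * (D y * deriv ψ y + q / 2 * deriv D y * ψ y)
  have hflux : ∀ x, HasDerivAt F (f x) x := fun x =>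
    (hasDerivAt_weighted_flux_of_Lop_eq hD hDpos hψ hψeq x).congr_deriv (by
      simp only [f, ← hDr x]
      ring)
  have hpowc : ∀ s : ℝ, Continuous fun x => D x ^ s := fun s =>
    hD.continuous.rpow_const fun x => Or.inl (hDpos x).ne'
  have hfc : Continuous f := by
    have := hpowc (q / 2)
    have := hpowc (q / 2 - 1)
    have := hD.continuous_deriv one_le_two
    have := hψ.continuous
    fun_prop
  have hF : Periodic F 1 := fun x => by
    simp only [F, hDper x, hDper.deriv x, hψper x, hψper.deriv x]
  have hf0 : ∫ x in 0..1, f x = 0 :=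
    hF.intervalIntegral_eq_zero_of_hasDerivAt hflux (hfc.intervalIntegrable 0 1)
  by_contra! hck
  have hχ : ∀ x, 0 < D x ^ (q / 2) * ψ x := fun x =>
    mul_pos (rpow_pos_of_pos (hDpos x) _) (hψpos x)
  have hweight : ∀ x, 0 < D x ^ (q / 2 - 1) * ψ x := fun x =>
    mul_pos (rpow_pos_of_pos (hDpos x) _) (hψpos x)
  have hf_nonneg : ∀ x, 0 ≤ f x := fun x =>
    add_nonneg (mul_nonneg (sub_nonneg.2 hck) (hχ x).le)
      (mul_nonneg (by positivity) (hweight x).le)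
  obtain ⟨x₀, hx₀⟩ := hD'
  have hq2 : q / 2 ≠ 0 := div_ne_zero hq two_ne_zero
  have hf_pos : 0 < f x₀ :=
    add_pos_of_nonneg_of_pos (mul_nonneg (sub_nonneg.2 hck) (hχ x₀).le)
      (mul_pos (by positivity) (hweight x₀))
  have hfper : Periodic f 1 := fun x => by
    simp only [f, hDper x, hDper.deriv x, hψper x]
  exact (hfper.intervalIntegral_pos one_pos hfc hf_nonneg ⟨x₀, hf_pos⟩).ne' hf0

theorem exists_periodic_pos_mul_deriv_deriv_add_eq_integral {r : ℝ → ℝ} (hr : Continuous r)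
    (hper : Periodic r 1) {q : ℝ} (hq : q ≠ 0) :
    ∃ D : ℝ → ℝ, ContDiff ℝ 2 D ∧ (∀ x, 0 < D x) ∧ Periodic D 1 ∧
      ∀ x, q / 2 * deriv (deriv D) x + r x = ∫ t in 0..1, r t := by
  obtain ⟨A, hA, hAper, hA''⟩ := exists_periodic_deriv_deriv_eq_sub_integral hr hper
  have hBper : Periodic (fun x => 2 / q * A x) 1 := fun x => by simp only [hAper x]
  obtain ⟨M, hM⟩ := (hBper.compact_of_continuous one_ne_zero
    (continuous_const.mul hA.continuous)).bddAbove
  have hD' : deriv (fun x => M + 1 - 2 / q * A x) = fun x => -(2 / q * deriv A x) :=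
    funext fun x => by rw [deriv_const_sub, deriv_const_mul _ (hA.differentiable two_ne_zero x)]
  refine ⟨fun x => M + 1 - 2 / q * A x, contDiff_const.sub (contDiff_const.mul hA),
    fun x => ?_, fun x => by simp only [hAper x], fun x => ?_⟩
  · linarith [hM ⟨x, rfl⟩]
  · rw [hD', deriv.fun_neg, deriv_const_mul _ (hA.differentiable_deriv_two x), hA'']
    field_simp
    ring

theorem stmt_2 (r : ℝ → ℝ) (hr : Continuous r) (hrper : Function.Periodic r 1)
    (hrnc : ¬ ∃ c, ∀ x, r x = c) (q : ℝ) (hq : q ≠ 0) :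
    ∃ D : ℝ → ℝ, ContDiff ℝ 2 D ∧ (∀ x, 0 < D x) ∧ Function.Periodic D 1 ∧
      ∀ (kq k₀ : ℝ) (ψ φ : ℝ → ℝ),
        IsEigenpair q 0 r D kq ψ → IsEigenpair 0 0 r D k₀ φ → kq < k₀ := by
  obtain ⟨D, hD, hDpos, hDper, hDr⟩ :=
    exists_periodic_pos_mul_deriv_deriv_add_eq_integral hr hrper hq
  have hD' : ∃ x, deriv D x ≠ 0 := by
    by_contra! hD'
    refine hrnc ⟨∫ t in 0..1, r t, fun x => ?_⟩
    simpa [show deriv D = 0 from funext hD'] using hDr x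
  exact ⟨D, hD, hDpos, hDper, fun kq k₀ ψ φ hψ hφ =>
    (hψ.lt_of_mul_deriv_deriv_add_eq hq hD hDpos hDper hDr hD').trans_le
      (hφ.integral_le hr (hD.differentiable two_ne_zero) hDper fun x => (hDpos x).le)⟩
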